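/- arXiv:2010.00126 — 7 statements merged into one kernel-verified Lean document; each statement's English description precedes it below -/
import Mathlib

section
/- Let f : ℝ → [0,1] be periodic with irrational period T, with f(0) = 1, and suppose there exist δ > 1 and q < 0 such that lim_{x→0} (f(x)-1)/|x|^δ = q. Then the set {f(n)^n : n ∈ ℕ} is dense in [0,1]. -/
/-!
By Dirichlet's theorem there are infinitely many `N` with `θ = |N - p T| < |T| / N`, so
`N θ ^ δ → 0` because `δ > 1`. For `n = m N` periodicity gives `f n = f x` with
`x = m (N - p T)`, and `n |x| ^ δ = N θ ^ δ · m ^ (1 + δ)`. Taking `m` least with this at least `c`,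
consecutive ratios `((m + 1) / m) ^ (1 + δ) → 1` force `n |x| ^ δ → c`, while `x → 0`.
Then `n (f n - 1) → c q`, so `f n ^ n → exp (c q)`, which is any `y ∈ (0, 1)` for `c = log y / q`.
-/

open Real Filter Topology

theorem Irrational.exists_nat_gt_abs_mul_sub_int_lt {ξ : ℝ} (hξ : Irrational ξ) (M : ℕ) :
    ∃ N : ℕ, M < N ∧ ∃ p : ℤ, 0 < |N * ξ - p| ∧ |N * ξ - p| < 1 / N := by
  have hpos (k : ℕ) (hk : 0 < k) (p : ℤ) : 0 < |k * ξ - p| :=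
    abs_pos.2 (sub_ne_zero.2 ((hξ.natCast_mul hk.ne').ne_int p))
  -- The finitely many `k ≤ M` stay a positive distance from `ℤ`, so a fine enough Dirichlet
  -- approximation must have a larger denominator.
  have hev : ∀ᶠ n : ℕ in atTop,
      ∀ k ∈ Finset.Icc 1 M, 1 / ((n : ℝ) + 1) < |k * ξ - round (k * ξ)| :=
    (Finset.eventually_all _).2 fun k hk => tendsto_one_div_add_atTop_nhds_zero_nat.eventually
      (gt_mem_nhds (hpos k (Finset.mem_Icc.1 hk).1 _))
  obtain ⟨n, hn, hn1⟩ := (hev.and (eventually_ge_atTop 1)).exists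
  obtain ⟨N, hN0, hNn, hN⟩ := Real.exists_nat_abs_mul_sub_round_le ξ hn1
  have hMN : M < N := by
    by_contra! h
    exact (hn N (Finset.mem_Icc.2 ⟨hN0, h⟩)).not_ge hN
  refine ⟨N, hMN, round (N * ξ), hpos N hN0 _, hN.trans_lt ?_⟩
  gcongr
  exact_mod_cast Nat.lt_succ_of_le hNn

/-- `⌈(c / b) ^ a⁻¹⌉₊` is the least natural number `m` with `b * m ^ a ≥ c`. -/
theorem tendsto_mul_natCeil_rpow_nhdsGT_zero {a c : ℝ} (ha : 0 < a) (hc : 0 < c) :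
    Tendsto (fun b : ℝ => b * (⌈(c / b) ^ a⁻¹⌉₊ : ℝ) ^ a) (𝓝[>] 0) (𝓝 c) := by
  have hr : Tendsto (fun b : ℝ => (c / b) ^ a⁻¹) (𝓝[>] 0) atTop := by
    refine (tendsto_rpow_atTop (inv_pos.2 ha)).comp ?_
    exact (tendsto_inv_nhdsGT_zero.const_mul_atTop hc).congr fun b => (div_eq_mul_inv c b).symm
  have hceil : Tendsto (fun r : ℝ => c * ((⌈r⌉₊ : ℝ) / r) ^ a) atTop (𝓝 c) := by
    simpa using (tendsto_nat_ceil_div_atTop.rpow_const (Or.inl one_ne_zero)).const_mul c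
  refine (hceil.comp hr).congr' ?_
  filter_upwards [self_mem_nhdsWithin] with b (hb : 0 < b)
  have hra : ((c / b) ^ a⁻¹) ^ a = c / b := rpow_inv_rpow (div_pos hc hb).le ha.ne'
  simp only [Function.comp_apply]
  rw [div_rpow (Nat.cast_nonneg _) (rpow_nonneg (div_pos hc hb).le _), hra]
  field_simp

theorem Irrational.exists_seq_nat_mul_abs_sub_int_mul_rpow_tendsto_zero {T δ : ℝ}
    (hT : Irrational T) (hδ : 1 < δ) :
    ∃ (N : ℕ → ℕ) (p : ℕ → ℤ), (∀ k, k < N k ∧ (N k : ℝ) - p k * T ≠ 0) ∧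
      Tendsto (fun k => N k * |N k - p k * T| ^ δ) atTop (𝓝 0) := by
  choose N hN p hp0 hp1 using hT.inv.exists_nat_gt_abs_mul_sub_int_lt
  have hNpos (k : ℕ) : (0 : ℝ) < N k := by exact_mod_cast (Nat.zero_le k).trans_lt (hN k)
  have habs (k : ℕ) : |(N k : ℝ) - p k * T| = |T| * |N k * T⁻¹ - p k| := by
    rw [← abs_mul, mul_sub, mul_left_comm, mul_inv_cancel₀ hT.ne_zero, mul_one, mul_comm T]
  have hne (k : ℕ) : (N k : ℝ) - p k * T ≠ 0 := by
    rw [← abs_pos, habs]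
    exact mul_pos (abs_pos.2 hT.ne_zero) (hp0 k)
  refine ⟨N, p, fun k => ⟨hN k, hne k⟩, ?_⟩
  have hNtop : Tendsto (fun k => (N k : ℝ)) atTop atTop :=
    tendsto_natCast_atTop_atTop.comp (tendsto_atTop_mono (fun k => (hN k).le) tendsto_id)
  have hbound : Tendsto (fun k => |T| ^ δ * (N k : ℝ) ^ (-(δ - 1))) atTop (𝓝 0) := by
    have := ((tendsto_rpow_neg_atTop (by linarith : 0 < δ - 1)).comp hNtop).const_mul (|T| ^ δ)
    rwa [mul_zero] at this
  refine squeeze_zero (fun k => by positivity) (fun k => ?_) hbound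
  calc (N k : ℝ) * |N k - p k * T| ^ δ ≤ N k * (|T| / N k) ^ δ := by
        gcongr
        rw [habs, ← mul_one_div]
        exact mul_le_mul_of_nonneg_left (hp1 k).le (abs_nonneg T)
    _ = |T| ^ δ * (N k : ℝ) ^ (-(δ - 1)) := by
        rw [div_rpow (abs_nonneg T) (hNpos k).le, neg_sub, rpow_sub (hNpos k), rpow_one]
        ring

theorem Irrational.exists_seq_nat_eq_add_int_mul_tendsto {T δ c : ℝ} (hT : Irrational T)
    (hδ : 1 < δ) (hc : 0 < c) :
    ∃ (n : ℕ → ℕ) (x : ℕ → ℝ), (∀ k, 0 < n k ∧ x k ≠ 0 ∧ ∃ z : ℤ, (n k : ℝ) = x k + z * T) ∧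
      Tendsto x atTop (𝓝 0) ∧ Tendsto (fun k => n k * |x k| ^ δ) atTop (𝓝 c) := by
  obtain ⟨N, p, hNp, hB⟩ := hT.exists_seq_nat_mul_abs_sub_int_mul_rpow_tendsto_zero hδ
  have hN0 (k : ℕ) : 0 < N k := Nat.zero_lt_of_lt (hNp k).1
  set B := fun k => (N k : ℝ) * |N k - p k * T| ^ δ with hBdef
  have hBpos (k : ℕ) : 0 < B k :=
    mul_pos (by exact_mod_cast hN0 k) (rpow_pos_of_pos (abs_pos.2 (hNp k).2) δ)
  set m := fun k => ⌈(c / B k) ^ (1 + δ)⁻¹⌉₊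
  have hm0 (k : ℕ) : 0 < m k := Nat.ceil_pos.2 (rpow_pos_of_pos (div_pos hc (hBpos k)) _)
  set n := fun k => m k * N k
  set x := fun k => (m k : ℝ) * (N k - p k * T)
  have hn0 (k : ℕ) : (0 : ℝ) < n k := by exact_mod_cast Nat.mul_pos (hm0 k) (hN0 k)
  have hscaled : Tendsto (fun k => n k * |x k| ^ δ) atTop (𝓝 c) := by
    have hB' : Tendsto B atTop (𝓝[>] 0) :=
      tendsto_nhdsWithin_iff.2 ⟨hB, Eventually.of_forall hBpos⟩
    refine ((tendsto_mul_natCeil_rpow_nhdsGT_zero (a := 1 + δ) (by linarith) hc).comp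
      hB').congr fun k => ?_
    change B k * (m k : ℝ) ^ (1 + δ) = _
    simp only [hBdef, n, x, abs_mul, Nat.abs_cast, Nat.cast_mul]
    rw [mul_rpow (Nat.cast_nonneg _) (abs_nonneg _),
      rpow_one_add' (Nat.cast_nonneg _) (by linarith)]
    ring
  have hntop : Tendsto (fun k => (n k : ℝ)) atTop atTop :=
    tendsto_natCast_atTop_atTop.comp <| tendsto_atTop_mono
      (fun k => (hNp k).1.le.trans (Nat.le_mul_of_pos_left _ (hm0 k))) tendsto_id
  have hx : Tendsto (fun k => |x k|) atTop (𝓝 0) := by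
    have hxδ := (hscaled.div_atTop hntop).rpow_const (p := δ⁻¹) (Or.inr (by positivity))
    rw [zero_rpow (by positivity)] at hxδ
    refine hxδ.congr fun k => ?_
    rw [mul_div_cancel_left₀ _ (hn0 k).ne', rpow_rpow_inv (abs_nonneg _) (by positivity)]
  refine ⟨n, x, fun k => ⟨?_, mul_ne_zero ?_ (hNp k).2, m k * p k, ?_⟩,
    (tendsto_zero_iff_abs_tendsto_zero x).2 hx, hscaled⟩
  · exact_mod_cast hn0 k
  · exact_mod_cast (hm0 k).ne'
  · simp only [n, x]
    push_cast
    ring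

theorem tendsto_one_add_pow_exp_of_tendsto_mul {ι : Type*} {l : Filter ι} {n : ι → ℕ}
    {u : ι → ℝ} {L : ℝ} (hu : Tendsto u l (𝓝 0)) (hnu : Tendsto (fun i => n i * u i) l (𝓝 L)) :
    Tendsto (fun i => (1 + u i) ^ n i) l (𝓝 (exp L)) := by
  have hpos : ∀ᶠ i in l, 0 < 1 + u i := by
    filter_upwards [hu.eventually (lt_mem_nhds (by norm_num : (-1 : ℝ) < 0))] with i hi
    linarith
  have hlower : Tendsto (fun i => n i * u i / (1 + u i)) l (𝓝 L) := by
    have := hnu.div (tendsto_const_nhds.add hu) (by norm_num : (1 : ℝ) + 0 ≠ 0)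
    rwa [add_zero, div_one] at this
  have hlog : Tendsto (fun i => n i * log (1 + u i)) l (𝓝 L) := by
    refine tendsto_of_tendsto_of_tendsto_of_le_of_le' hlower hnu ?_ ?_
    · filter_upwards [hpos] with i hi
      rw [mul_div_assoc]
      gcongr
      calc u i / (1 + u i) = 1 - (1 + u i)⁻¹ := by field_simp; ring
        _ ≤ log (1 + u i) := one_sub_inv_le_log_of_pos hi
    · filter_upwards [hpos] with i hi
      gcongr
      linarith [log_le_sub_one_of_pos hi]
  refine ((continuous_exp.tendsto L).comp hlog).congr' ?_
  filter_upwards [hpos] with i hi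
  simp [exp_nat_mul, exp_log hi]

theorem Function.Periodic.tendsto_pow_of_tendsto_mul_abs_rpow {f : ℝ → ℝ} {T δ q c : ℝ}
    (hper : Function.Periodic f T) (hδ : 0 < δ)
    (hlim : Tendsto (fun x : ℝ => (f x - 1) / |x| ^ δ) (𝓝[≠] 0) (𝓝 q))
    {n : ℕ → ℕ} {x : ℕ → ℝ} (hnx : ∀ k, x k ≠ 0 ∧ ∃ z : ℤ, (n k : ℝ) = x k + z * T)
    (hx : Tendsto x atTop (𝓝 0)) (hnxc : Tendsto (fun k => n k * |x k| ^ δ) atTop (𝓝 c)) :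
    Tendsto (fun k => f (n k) ^ n k) atTop (𝓝 (exp (c * q))) := by
  have hfn (k : ℕ) : f (n k) = 1 + (f (x k) - 1) := by
    obtain ⟨-, z, hz⟩ := hnx k
    rw [hz, hper.int_mul z, add_sub_cancel]
  have hratio : Tendsto (fun k => (f (x k) - 1) / |x k| ^ δ) atTop (𝓝 q) :=
    hlim.comp (tendsto_nhdsWithin_iff.2 ⟨hx, Eventually.of_forall fun k => (hnx k).1⟩)
  have hxδ : Tendsto (fun k => |x k| ^ δ) atTop (𝓝 0) := by
    simpa [zero_rpow hδ.ne'] using hx.abs.rpow_const (p := δ) (Or.inr hδ.le)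
  have hdecomp (k : ℕ) : f (x k) - 1 = |x k| ^ δ * ((f (x k) - 1) / |x k| ^ δ) :=
    (mul_div_cancel₀ _ (rpow_pos_of_pos (abs_pos.2 (hnx k).1) δ).ne').symm
  have hu : Tendsto (fun k => f (x k) - 1) atTop (𝓝 0) := by
    simpa [← hdecomp] using hxδ.mul hratio
  have hnu : Tendsto (fun k => n k * (f (x k) - 1)) atTop (𝓝 (c * q)) :=
    (hnxc.mul hratio).congr fun k => by rw [mul_assoc, ← hdecomp k]
  simpa only [hfn] using tendsto_one_add_pow_exp_of_tendsto_mul hu hnu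

theorem stmt_3_general (f : ℝ → ℝ)
    (T : ℝ) (hT : Irrational T) (hper : Function.Periodic f T)
    (δ q : ℝ) (hδ : 1 < δ) (hq : q < 0)
    (hlim : Filter.Tendsto (fun x : ℝ => (f x - 1) / |x| ^ δ)
      (nhdsWithin 0 {0}ᶜ) (nhds q)) :
    Set.Icc (0:ℝ) 1 ⊆ closure {x : ℝ | ∃ n : ℕ, 0 < n ∧ x = f n ^ n} := by
  have hIoo : Set.Ioo (0 : ℝ) 1 ⊆ closure {x : ℝ | ∃ n : ℕ, 0 < n ∧ x = f n ^ n} := by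
    rintro y ⟨hy0, hy1⟩
    have hc : 0 < log y / q := div_pos_of_neg_of_neg (log_neg hy0 hy1) hq
    obtain ⟨n, x, hnx, hx, hnxc⟩ := hT.exists_seq_nat_eq_add_int_mul_tendsto hδ hc
    have hpow := hper.tendsto_pow_of_tendsto_mul_abs_rpow (by linarith) hlim
      (fun k => (hnx k).2) hx hnxc
    rw [div_mul_cancel₀ _ hq.ne, exp_log hy0] at hpow
    exact mem_closure_of_tendsto hpow (Eventually.of_forall fun k => ⟨n k, (hnx k).1, rfl⟩)
  rw [← closure_Ioo zero_ne_one]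
  exact closure_minimal hIoo isClosed_closure

theorem stmt_3 (f : ℝ → ℝ) (hrange : ∀ x, f x ∈ Set.Icc (0:ℝ) 1)
    (T : ℝ) (hT : Irrational T) (hper : Function.Periodic f T)
    (h0 : f 0 = 1) (δ q : ℝ) (hδ : 1 < δ) (hq : q < 0)
    (hlim : Filter.Tendsto (fun x : ℝ => (f x - 1) / |x| ^ δ)
      (nhdsWithin 0 {0}ᶜ) (nhds q)) :
    Set.Icc (0:ℝ) 1 ⊆ closure {x : ℝ | ∃ n : ℕ, 0 < n ∧ x = f n ^ n} :=
  stmt_3_general f T hT hper δ q hδ hq hlim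
end

section
/- Let α be a real number such that for all δ > 0 there exist integers m and positive integers n with α < m/n and m/n - δ/n² < α. Then for all a > 0 and ε > 0 there exist integers m and positive integers n such that a < n²(m/n - α) < a + ε. -/
theorem stmt_7 (α : ℝ)
    (h : ∀ δ : ℝ, 0 < δ → ∃ (m : ℤ) (n : ℕ), 0 < n ∧
        α < (m : ℝ) / n ∧ (m : ℝ) / n - δ / (n : ℝ) ^ 2 < α)
    (a ε : ℝ) (ha : 0 < a) (hε : 0 < ε) :
    ∃ (m : ℤ) (n : ℕ), 0 < n ∧
      a < (n : ℝ) ^ 2 * ((m : ℝ) / n - α) ∧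
      (n : ℝ) ^ 2 * ((m : ℝ) / n - α) < a + ε := by
  set δ : ℝ := min a (ε ^ 2 / (9 * a)) with hδdef
  have hδ0 : 0 < δ := by
    apply lt_min ha
    positivity
  obtain ⟨m, n, hn, h1, h2⟩ := h δ hδ0
  have hn0 : (0 : ℝ) < (n : ℝ) := by exact_mod_cast hn
  set x : ℝ := (n : ℝ) ^ 2 * ((m : ℝ) / n - α) with hxdef
  have hx0 : 0 < x := by
    apply mul_pos (by positivity)
    linarith
  have hxδ : x < δ := by
    have h2' : (m : ℝ) / n - α < δ / (n : ℝ) ^ 2 := by linarith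
    calc x < (n : ℝ) ^ 2 * (δ / (n : ℝ) ^ 2) := by
            exact mul_lt_mul_of_pos_left h2' (by positivity)
      _ = δ := by field_simp
  have hxa : x < a := lt_of_lt_of_le hxδ (min_le_left _ _)
  have hxε : 9 * a * x < ε ^ 2 := by
    have : x < ε ^ 2 / (9 * a) := lt_of_lt_of_le hxδ (min_le_right _ _)
    have h9a : (0:ℝ) < 9 * a := by linarith
    calc 9 * a * x < 9 * a * (ε ^ 2 / (9 * a)) := by
          exact mul_lt_mul_of_pos_left this h9a
      _ = ε ^ 2 := by field_simp
  have hex : ∃ k : ℕ, a < (k : ℝ) ^ 2 * x := by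
    obtain ⟨k, hk⟩ := exists_nat_gt (max 1 (a / x))
    refine ⟨k, ?_⟩
    have hk1 : (1 : ℝ) < k := lt_of_le_of_lt (le_max_left _ _) hk
    have hk2 : a / x < k := lt_of_le_of_lt (le_max_right _ _) hk
    have : a < (k : ℝ) * x := by
      rw [div_lt_iff₀ hx0] at hk2; linarith
    nlinarith
  classical
  set k := Nat.find hex with hkdef
  have hk : a < (k : ℝ) ^ 2 * x := Nat.find_spec hex
  have hk2 : 2 ≤ k := by
    by_contra hc
    push_neg at hc
    interval_cases k
    · norm_num at hk; linarith
    · norm_num at hk; linarith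
  have hmin : ¬ a < ((k - 1 : ℕ) : ℝ) ^ 2 * x := Nat.find_min hex (by omega)
  push_neg at hmin
  set l := k - 1 with hldef
  have hl1 : 1 ≤ l := by omega
  have hl1' : (1 : ℝ) ≤ (l : ℝ) := by exact_mod_cast hl1
  have hck : (k : ℝ) = (l : ℝ) + 1 := by
    have : k = l + 1 := by omega
    rw [this]; push_cast; ring
  -- gap bound : (2l+1) * x < ε
  have hgap : (2 * (l : ℝ) + 1) * x < ε := by
    have hsq : ((2 * (l : ℝ) + 1) * x) ^ 2 < ε ^ 2 := by
      have h1' : ((2 * (l : ℝ) + 1) * x) ^ 2 ≤ 9 * ((l : ℝ) ^ 2 * x) * x := by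
        nlinarith [sq_nonneg x, hx0.le, mul_nonneg (mul_nonneg (sub_nonneg.2 hl1') (by positivity : (0:ℝ) ≤ 5 * (l:ℝ) + 1)) (sq_nonneg x)]
      have h2' : 9 * ((l : ℝ) ^ 2 * x) * x ≤ 9 * a * x := by
        nlinarith
      linarith
    nlinarith [hx0.le, hl1']
  refine ⟨(k : ℤ) * m, k * n, by positivity, ?_⟩
  have hkR : (k : ℝ) ≠ 0 := by positivity
  have hval : ((k * n : ℕ) : ℝ) ^ 2 * (((k : ℤ) * m : ℤ) / ((k * n : ℕ) : ℝ) - α)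
      = (k : ℝ) ^ 2 * x := by
    push_cast
    rw [mul_div_mul_left _ _ hkR]
    ring
  rw [hval]
  constructor
  · exact hk
  · have : (k : ℝ) ^ 2 * x = (l : ℝ) ^ 2 * x + (2 * (l : ℝ) + 1) * x := by
      rw [hck]; ring
    linarith
end

section
/- Let 0 < r < 1 and let f : ℕ → ℝ satisfy lim_{n→∞} f(n) = 0. Then there exists an irrational real number α such that there exist infinitely many N ∈ ℕ with |{n ≤ N : r < |cos(nπα)|^n}| ≥ f(N)·N. -/
/-!
Take `α = ∑ 2^{-a k}` with exponents `a k` growing so fast that `α` is a Liouville number and,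
at a scale `N_k ≥ 2^{a k}` chosen with `f N_k ≤ 2^{-a k - 1}`, the dyadic truncation `p / 2^{a k}`
is within `δ` of `α` where `N_k (N_k π δ)² < 2 (1 - r)`. For each multiple `n ≤ N_k` of `2^{a k}`,
`|cos (n π α)| = |cos (n π (α - p / 2^{a k}))|`, and `|cos x|^n ≥ 1 - n x² / 2 > r`; there are
`⌊N_k / 2^{a k}⌋ ≥ f N_k · N_k` such `n`.
-/

open Filter Finset Real

theorem one_sub_mul_sq_div_two_le_abs_cos_pow (x : ℝ) (n : ℕ) :
    1 - n * (x ^ 2 / 2) ≤ |cos x| ^ n := by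
  rcases le_or_gt (x ^ 2 / 2) 1 with hx | hx
  · calc 1 - n * (x ^ 2 / 2) = 1 + n * (-(x ^ 2 / 2)) := by ring
      _ ≤ (1 + -(x ^ 2 / 2)) ^ n := one_add_mul_le_pow (by linarith) n
      _ ≤ |cos x| ^ n := by
        gcongr
        · linarith
        · exact one_sub_sq_div_two_le_cos.trans (le_abs_self _)
  · rcases n.eq_zero_or_pos with rfl | hn
    · simp
    · have : (1 : ℝ) ≤ n := by exact_mod_cast hn
      nlinarith [pow_nonneg (abs_nonneg (cos x)) n]

theorem abs_cos_mul_pi_sub_div {n q : ℕ} (hqn : q ∣ n) (α : ℝ) (p : ℤ) :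
    |cos (n * π * (α - p / q))| = |cos (n * π * α)| := by
  obtain ⟨m, rfl⟩ := hqn
  rcases q.eq_zero_or_pos with rfl | hq
  · simp
  have : (↑(q * m) : ℝ) * π * α = (q * m) * π * (α - p / q) + ((m * p : ℤ) : ℝ) * π := by
    push_cast
    field_simp
    ring
  rw [this, Nat.cast_mul, cos_add_int_mul_pi, abs_mul, abs_zpow, abs_neg, abs_one, one_zpow, one_mul]

-- The counted `n` are the multiples of `q` in `(0, N]`.
theorem div_le_ncard_of_abs_sub_div_le {r α δ : ℝ} {p : ℤ} {q N : ℕ}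
    (hα : |α - p / q| ≤ δ) (hN : N * (N * π * δ) ^ 2 < 2 * (1 - r)) :
    N / q ≤ {n : ℕ | 0 < n ∧ n ≤ N ∧ r < |cos (n * π * α)| ^ n}.ncard := by
  have hsub : (({n ∈ Ioc 0 N | q ∣ n} : Finset ℕ) : Set ℕ) ⊆
      {n : ℕ | 0 < n ∧ n ≤ N ∧ r < |cos (n * π * α)| ^ n} := by
    intro n hn
    simp only [coe_filter, mem_Ioc, Set.mem_ofPred_eq] at hn
    obtain ⟨⟨hn0, hnN⟩, hqn⟩ := hn
    refine ⟨hn0, hnN, ?_⟩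
    rw [← abs_cos_mul_pi_sub_div hqn α p]
    set x := (n : ℝ) * π * (α - p / q)
    have hnN' : (n : ℝ) ≤ N := by exact_mod_cast hnN
    have hx : |x| ≤ N * π * δ := by
      simp only [x, abs_mul, Nat.abs_cast, abs_of_pos pi_pos]
      gcongr
    have : n * x ^ 2 ≤ N * (N * π * δ) ^ 2 := by
      rw [← sq_abs x]
      gcongr
    linarith [one_sub_mul_sq_div_two_le_abs_cos_pow x n]
  have hfin : {n : ℕ | 0 < n ∧ n ≤ N ∧ r < |cos (n * π * α)| ^ n}.Finite :=
    (Set.finite_Iic N).subset fun n hn => hn.2.1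
  calc N / q = (({n ∈ Ioc 0 N | q ∣ n} : Finset ℕ) : Set ℕ).ncard := by
        rw [Set.ncard_coe_finset, Nat.Ioc_filter_dvd_card_eq_div]
    _ ≤ _ := Set.ncard_le_ncard hsub hfin

theorem Nat.cast_div_two_mul_le_cast_div {K : Type*} [Field K] [LinearOrder K]
    [IsStrictOrderedRing K] {N q : ℕ} (hq : 0 < q) (hqN : q ≤ N) :
    (N : K) / (2 * q) ≤ ((N / q : ℕ) : K) := by
  have hdiv : 1 ≤ N / q := (Nat.one_le_div_iff hq).2 hqN
  have : N ≤ 2 * (q * (N / q)) := by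
    have := Nat.div_add_mod N q
    have := Nat.mod_lt N hq
    nlinarith
  rw [div_le_iff₀ (by positivity)]
  calc (N : K) ≤ ((2 * (q * (N / q)) : ℕ) : K) := by exact_mod_cast this
    _ = _ := by push_cast; ring

namespace DyadicLiouville

variable {a : ℕ → ℕ}

theorem summable (ha : StrictMono a) : Summable fun i => (2⁻¹ : ℝ) ^ a i :=
  (summable_geometric_of_lt_one (by norm_num) (by norm_num)).of_nonneg_of_le
    (fun _ => by positivity) fun i => pow_le_pow_of_le_one (by norm_num) (by norm_num) (ha.id_le i)

theorem tsum_tail_le (ha : StrictMono a) (k : ℕ) :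
    ∑' i, (2⁻¹ : ℝ) ^ a (i + k) ≤ 2 * 2⁻¹ ^ a k := by
  have hle : ∀ i, (2⁻¹ : ℝ) ^ a (i + k) ≤ 2⁻¹ ^ a k * 2⁻¹ ^ i := fun i => by
    rw [← pow_add, add_comm (a k)]
    exact pow_le_pow_of_le_one (by norm_num) (by norm_num) (ha.add_le_nat i k)
  calc ∑' i, (2⁻¹ : ℝ) ^ a (i + k) ≤ ∑' i, 2⁻¹ ^ a k * (2⁻¹ : ℝ) ^ i :=
        ((summable_nat_add_iff k).2 (summable ha)).tsum_le_tsum hle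
          ((summable_geometric_of_lt_one (by norm_num) (by norm_num)).mul_left _)
    _ = 2 * 2⁻¹ ^ a k := by rw [tsum_mul_left, tsum_geometric_inv_two, mul_comm]

theorem exists_int_div_eq_sum (ha : Monotone a) (k : ℕ) :
    ∃ p : ℤ, (p : ℝ) / 2 ^ a k = ∑ j ∈ range (k + 1), (2⁻¹ : ℝ) ^ a j := by
  induction k with
  | zero => exact ⟨1, by simp⟩
  | succ k ih =>
    obtain ⟨p, hp⟩ := ih
    refine ⟨p * 2 ^ (a (k + 1) - a k) + 1, ?_⟩
    have h2 : (2 : ℝ) ^ a (k + 1) = 2 ^ (a (k + 1) - a k) * 2 ^ a k := by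
      rw [← pow_add, Nat.sub_add_cancel (ha k.le_succ)]
    rw [sum_range_succ, ← hp, inv_pow, h2]
    push_cast
    field_simp

theorem exists_approx (ha : StrictMono a) (k : ℕ) :
    ∃ p : ℤ, 0 < ∑' i, (2⁻¹ : ℝ) ^ a i - p / 2 ^ a k ∧
      ∑' i, (2⁻¹ : ℝ) ^ a i - p / 2 ^ a k ≤ 2 * 2⁻¹ ^ a (k + 1) := by
  obtain ⟨p, hp⟩ := exists_int_div_eq_sum ha.monotone k
  refine ⟨p, ?_⟩
  rw [← (summable ha).sum_add_tsum_nat_add (k + 1), hp, add_sub_cancel_left]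
  exact ⟨((summable_nat_add_iff _).2 (summable ha)).tsum_pos (fun _ => by positivity) 0
    (by positivity), tsum_tail_le ha (k + 1)⟩

theorem liouville_tsum (ha : StrictMono a) (hgap : ∀ k, k * a k + 2 ≤ a (k + 1)) :
    Liouville (∑' i, (2⁻¹ : ℝ) ^ a i) := by
  intro n
  obtain ⟨p, hpos, hle⟩ := exists_approx ha (n + 1)
  have ha1 : 1 ≤ a (n + 1) := (Nat.zero_le _).trans_lt (ha n.succ_pos)
  refine ⟨p, 2 ^ a (n + 1), ?_, ?_, ?_⟩
  · exact one_lt_pow₀ one_lt_two (by omega)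
  · push_cast
    exact (sub_pos.1 hpos).ne'
  · push_cast
    rw [abs_of_pos hpos, one_div, ← inv_pow, ← inv_pow, ← pow_mul]
    calc _ ≤ 2 * (2⁻¹ : ℝ) ^ a (n + 1 + 1) := hle
      _ ≤ 2 * 2⁻¹ ^ (a (n + 1) * n + 2) := by
        gcongr 2 * ?_
        exact pow_le_pow_of_le_one (by norm_num) (by norm_num) (by nlinarith [hgap (n + 1)])
      _ < 2⁻¹ ^ (a (n + 1) * n) := by
        rw [pow_add]
        nlinarith [pow_pos (by norm_num : (0 : ℝ) < 2⁻¹) (a (n + 1) * n)]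

end DyadicLiouville

theorem Nat.exists_strictMono_forall_le_succ (g : ℕ → ℕ) :
    ∃ a : ℕ → ℕ, StrictMono a ∧ ∀ k, k * a k + 2 ≤ a (k + 1) ∧ g (a k) ≤ a (k + 1) := by
  let a : ℕ → ℕ := fun k => Nat.rec 0 (fun k ak => (k + 1) * ak + 2 + g ak) k
  have step : ∀ k, a (k + 1) = (k + 1) * a k + 2 + g (a k) := fun _ => rfl
  refine ⟨a, strictMono_nat_of_lt_succ fun k => ?_, fun k => ⟨?_, ?_⟩⟩ <;> rw [step] <;> nlinarith

theorem stmt_9_general (r : ℝ) (hr1 : r < 1) (f : ℕ → ℝ)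
    (hf : Filter.Tendsto f Filter.atTop (nhds 0)) :
    ∃ α : ℝ, Irrational α ∧
      {N : ℕ | 0 < N ∧ f N * N ≤
        ({n : ℕ | 0 < n ∧ n ≤ N ∧
            r < |Real.cos (n * Real.pi * α)| ^ n}.ncard : ℝ)}.Infinite := by
  have hscale (A : ℕ) : ∃ N : ℕ, 2 ^ A ≤ N ∧ f N ≤ 1 / (2 * 2 ^ A) :=
    ((hf.eventually (eventually_lt_nhds (by positivity))).and (eventually_ge_atTop _)).exists.imp
      fun _ h => ⟨h.2, h.1.le⟩
  choose N hqN hfN using hscale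
  have hthreshold (A : ℕ) : ∃ L, ∀ B ≥ L, N A * (N A * π * (2 * 2⁻¹ ^ B)) ^ 2 < 2 * (1 - r) := by
    have : Tendsto (fun B : ℕ => (N A : ℝ) * (N A * π * (2 * 2⁻¹ ^ B)) ^ 2) atTop (nhds 0) := by
      simpa using ((tendsto_pow_atTop_nhds_zero_of_lt_one (r := (2⁻¹ : ℝ)) (by norm_num)
        (by norm_num)).const_mul 2 |>.const_mul (N A * π) |>.pow 2 |>.const_mul (N A : ℝ))
    exact eventually_atTop.1 (this.eventually (eventually_lt_nhds (by linarith)))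
  choose L hL using hthreshold
  obtain ⟨a, ha, hgap⟩ := Nat.exists_strictMono_forall_le_succ L
  refine ⟨_, (DyadicLiouville.liouville_tsum ha fun k => (hgap k).1).irrational,
    Set.infinite_of_forall_exists_gt fun m => ⟨N (a m), ⟨?_, ?_⟩, ?_⟩⟩
  · exact (Nat.two_pow_pos _).trans_le (hqN _)
  · obtain ⟨p, hpos, hle⟩ := DyadicLiouville.exists_approx ha m
    have hcount := div_le_ncard_of_abs_sub_div_le (r := r) (q := 2 ^ a m) (N := N (a m))
      (by push_cast; rwa [abs_of_pos hpos]) (hL _ _ (hgap m).2)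
    calc f (N (a m)) * N (a m) ≤ N (a m) / (2 * (2 ^ a m : ℕ)) := by
          push_cast; rw [div_eq_mul_inv, mul_comm]; gcongr; simpa using hfN (a m)
      _ ≤ ((N (a m) / 2 ^ a m : ℕ) : ℝ) := Nat.cast_div_two_mul_le_cast_div (by positivity) (hqN _)
      _ ≤ _ := by exact_mod_cast hcount
  · calc m < 2 ^ m := Nat.lt_two_pow_self
      _ ≤ 2 ^ a m := Nat.pow_le_pow_right two_pos (ha.id_le m)
      _ ≤ N (a m) := hqN _

theorem stmt_9 (r : ℝ) (hr : 0 < r) (hr1 : r < 1) (f : ℕ → ℝ)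
    (hf : Filter.Tendsto f Filter.atTop (nhds 0)) :
    ∃ α : ℝ, Irrational α ∧
      {N : ℕ | 0 < N ∧ f N * N ≤
        ({n : ℕ | 0 < n ∧ n ≤ N ∧
            r < |Real.cos (n * Real.pi * α)| ^ n}.ncard : ℝ)}.Infinite :=
  stmt_9_general r hr1 f hf
end

section
/- Let a > 0 and let α be irrational. Then there exist infinitely many N ∈ ℕ such that |{n ≤ N : ∃ m ∈ ℤ, |α - m/n| < a/n^{3/2}}| ≥ 5^{1/4}a^{1/2}N^{1/4}/2. -/
/-!
Take a good rational approximation `p/d` of `α` (`|α - p/d| < 1/d²`, available with `d`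
arbitrarily large by Dirichlet) and let `K = ⌊(a²d)^{1/3}⌋`. For `k ≤ K`, the fraction
`kp/(kd)` approximates `α` to within `1/d² ≤ a/(kd)^{3/2}`, the last inequality being `k³ ≤ a²d`.
So `N = Kd` has at least `K` good denominators, and `K³ ≥ (5/16) a²d` once `a²d ≥ 27`, which is
exactly the claimed lower bound `5^{1/4} a^{1/2} N^{1/4} / 2 ≤ K`.
-/

theorem Irrational.exists_rat_abs_sub_lt_one_div_den_sq_den_gt {ξ : ℝ} (hξ : Irrational ξ)
    (M : ℕ) : ∃ q : ℚ, |ξ - q| < 1 / (q.den : ℝ) ^ 2 ∧ M < q.den := by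
  obtain ⟨ε, hε, hfar⟩ := (hξ.eventually_forall_le_dist_cast_rat_of_den_le M).exists_gt
  obtain ⟨q₀, hq₀⟩ := exists_rat_near ξ hε
  obtain ⟨q, hgood, hcloser⟩ := Real.exists_rat_abs_sub_lt_and_lt_of_irrational hξ q₀
  refine ⟨q, hgood, not_le.1 fun hden => ?_⟩
  have hfar_q := hfar q hden
  rw [Real.dist_eq] at hfar_q
  linarith

theorem exists_nat_pow_le_lt_succ_pow {y : ℝ} (hy : 0 ≤ y) {n : ℕ} (hn : n ≠ 0) :
    ∃ K : ℕ, (K : ℝ) ^ n ≤ y ∧ y < ((K : ℝ) + 1) ^ n := by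
  set x := y ^ (n⁻¹ : ℝ)
  have hx : 0 ≤ x := by positivity
  have hxn : x ^ n = y := Real.rpow_inv_natCast_pow hy hn
  refine ⟨⌊x⌋₊, ?_, ?_⟩
  · rw [← hxn]; gcongr; exact Nat.floor_le hx
  · rw [← hxn]; gcongr; exact Nat.lt_floor_add_one x

theorem exists_nat_pos_five_mul_le_sixteen_mul_pow_three_le {y : ℝ} (hy : 27 ≤ y) :
    ∃ K : ℕ, 0 < K ∧ 5 * y ≤ 16 * (K : ℝ) ^ 3 ∧ (K : ℝ) ^ 3 ≤ y := by
  obtain ⟨K, hKle, hKlt⟩ := exists_nat_pow_le_lt_succ_pow (by linarith) three_ne_zero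
  have hK3 : (3 : ℝ) ≤ K := by
    have : (3 : ℝ) < K + 1 := lt_of_pow_lt_pow_left₀ 3 (by positivity) (by linarith)
    exact_mod_cast (by linarith : (2 : ℝ) < K)
  refine ⟨K, by exact_mod_cast (by linarith : (0 : ℝ) < K), ?_, hKle⟩
  -- `K ≥ 3` gives `(K + 1)³ ≤ (4/3)³ K³ < (16/5) K³`.
  nlinarith [mul_le_mul hK3 hK3 (by norm_num) (by positivity)]

theorem Real.rpow_three_halves_le_iff {x b : ℝ} (hx : 0 ≤ x) (hb : 0 ≤ b) :
    x ^ ((3 : ℝ) / 2) ≤ b ↔ x ^ 3 ≤ b ^ 2 := by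
  rw [show (3 : ℝ) / 2 = 3 * (1 / 2) by norm_num, Real.rpow_mul hx, ← Real.sqrt_eq_rpow,
    Real.sqrt_le_iff, and_iff_right hb]
  norm_cast

theorem five_rpow_quarter_mul_rpow_half_mul_rpow_quarter_div_two_le {a N K : ℝ}
    (ha : 0 ≤ a) (hN : 0 ≤ N) (hK : 0 ≤ K) (h : 5 * a ^ 2 * N ≤ 16 * K ^ 4) :
    (5:ℝ) ^ ((1:ℝ)/4) * a ^ ((1:ℝ)/2) * N ^ ((1:ℝ)/4) / 2 ≤ K := by
  have ha' : a ^ ((1:ℝ)/2) = (a ^ 2) ^ ((1:ℝ)/4) := by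
    rw [← Real.rpow_natCast, ← Real.rpow_mul ha]; norm_num
  rw [ha', ← Real.mul_rpow (by norm_num) (by positivity), ← Real.mul_rpow (by positivity) hN,
    div_le_iff₀ two_pos, one_div, Real.rpow_inv_le_iff_of_pos (by positivity) (by positivity)
    (by norm_num)]
  norm_num
  linarith

def goodDenominators (α a : ℝ) (N : ℕ) : Set ℕ :=
  {n : ℕ | 0 < n ∧ n ≤ N ∧ ∃ m : ℤ, |α - (m : ℝ) / n| < a / (n : ℝ) ^ ((3:ℝ)/2)}

theorem finite_goodDenominators (α a : ℝ) (N : ℕ) : (goodDenominators α a N).Finite :=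
  (Set.finite_Iic N).subset fun _ hn => hn.2.1

theorem mul_den_mem_goodDenominators {α a : ℝ} (ha : 0 ≤ a) {q : ℚ}
    (hq : |α - q| < 1 / (q.den : ℝ) ^ 2) {k N : ℕ} (hk : 0 < k) (hkN : k * q.den ≤ N)
    (hk3 : (k : ℝ) ^ 3 ≤ a ^ 2 * q.den) : k * q.den ∈ goodDenominators α a N := by
  have hk' : (0 : ℝ) < k := by exact_mod_cast hk
  have hd : (0 : ℝ) < q.den := by exact_mod_cast q.pos
  refine ⟨Nat.mul_pos hk q.pos, hkN, k * q.num, ?_⟩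
  have hfrac : ((k * q.num : ℤ) : ℝ) / ((k * q.den : ℕ) : ℝ) = q := by
    push_cast
    rw [mul_div_mul_left _ _ hk'.ne', Rat.cast_def]
  rw [hfrac]
  refine hq.trans_le ?_
  rw [div_le_div_iff₀ (by positivity) (by positivity), one_mul,
    Real.rpow_three_halves_le_iff (by positivity) (by positivity)]
  calc (((k * q.den : ℕ) : ℝ)) ^ 3 = (k : ℝ) ^ 3 * (q.den : ℝ) ^ 3 := by push_cast; ring
    _ ≤ a ^ 2 * q.den * (q.den : ℝ) ^ 3 := by gcongr
    _ = (a * (q.den : ℝ) ^ 2) ^ 2 := by ring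

theorem le_ncard_goodDenominators {α a : ℝ} (ha : 0 ≤ a) {q : ℚ}
    (hq : |α - q| < 1 / (q.den : ℝ) ^ 2) {K : ℕ} (hK : (K : ℝ) ^ 3 ≤ a ^ 2 * q.den) :
    K ≤ (goodDenominators α a (K * q.den)).ncard := by
  have hmaps : ∀ k ∈ Set.Icc 1 K, k * q.den ∈ goodDenominators α a (K * q.den) :=
    fun k ⟨hk1, hkK⟩ => mul_den_mem_goodDenominators ha hq hk1 (Nat.mul_le_mul_right _ hkK)
      (le_trans (by gcongr) hK)
  have hinj : Set.InjOn (· * q.den) (Set.Icc 1 K) :=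
    fun _ _ _ _ h => Nat.eq_of_mul_eq_mul_right q.pos h
  simpa using Set.ncard_le_ncard_of_injOn _ hmaps hinj (finite_goodDenominators α a _)

theorem stmt_11 (a : ℝ) (ha : 0 < a) (α : ℝ) (hα : Irrational α) :
    {N : ℕ | 0 < N ∧
      (5:ℝ) ^ ((1:ℝ)/4) * a ^ ((1:ℝ)/2) * (N : ℝ) ^ ((1:ℝ)/4) / 2 ≤
        ({n : ℕ | 0 < n ∧ n ≤ N ∧
            ∃ m : ℤ, |α - (m : ℝ) / n| < a / (n : ℝ) ^ ((3:ℝ)/2)}.ncard :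
          ℝ)}.Infinite := by
  refine Set.infinite_of_forall_exists_gt fun B => ?_
  obtain ⟨q, hq, hden⟩ := hα.exists_rat_abs_sub_lt_one_div_den_sq_den_gt (max B ⌈27 / a ^ 2⌉₊)
  set d := q.den
  have h27 : 27 ≤ a ^ 2 * d := by
    have := (Nat.le_ceil (27 / a ^ 2)).trans (Nat.cast_le.2 (le_max_right B _ |>.trans hden.le))
    rwa [div_le_iff₀ (by positivity), mul_comm] at this
  obtain ⟨K, hK, hKlower, hKupper⟩ := exists_nat_pos_five_mul_le_sixteen_mul_pow_three_le h27
  refine ⟨K * d, ⟨by positivity, ?_⟩,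
    (le_max_left B _).trans_lt hden |>.trans_le (Nat.le_mul_of_pos_left d hK)⟩
  have hbound : 5 * a ^ 2 * (K * d) ≤ 16 * (K : ℝ) ^ 4 := by
    calc 5 * a ^ 2 * (K * d) = K * (5 * (a ^ 2 * d)) := by ring
      _ ≤ K * (16 * (K : ℝ) ^ 3) := by gcongr
      _ = 16 * (K : ℝ) ^ 4 := by ring
  exact (five_rpow_quarter_mul_rpow_half_mul_rpow_quarter_div_two_le (K := K) ha.le
    (by positivity) (by positivity) (by push_cast; exact hbound)).trans
    (Nat.cast_le.2 (le_ncard_goodDenominators ha.le hq hKupper))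
end

section
/- Let 0 < r < 1, set a = √(1-r)/π, and suppose m ∈ ℤ and n ∈ ℕ with n ≥ 1 satisfy |α - m/n| < a/n^{3/2} for a real number α. Then |cos(παn)|^n > r. -/
theorem stmt_14 (r : ℝ) (hr : 0 < r) (hr1 : r < 1) (α : ℝ) (m : ℤ) (n : ℕ)
    (hn : 1 ≤ n)
    (h : |α - (m : ℝ) / n| < (Real.sqrt (1 - r) / Real.pi) / (n : ℝ) ^ ((3:ℝ)/2)) :
    r < |Real.cos (Real.pi * α * n)| ^ n := by
  have hnR : (0:ℝ) < n := by exact_mod_cast hn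
  have hn1 : (1:ℝ) ≤ n := by exact_mod_cast hn
  have hπ := Real.pi_pos
  set x := α - (m:ℝ)/n with hx
  set y := Real.pi * x * n with hy
  have hcos : |Real.cos (Real.pi * α * n)| = |Real.cos y| := by
    have hE : Real.pi * α * n = y + m * Real.pi := by
      rw [hy, hx]; field_simp; ring
    rw [hE, Real.cos_add_int_mul_pi]
    rcases Int.even_or_odd m with hm | hm
    · rw [hm.neg_one_zpow]; simp
    · rw [hm.neg_one_zpow]; simp
  have h1r : (0:ℝ) ≤ 1 - r := by linarith
  have hsq : ((n:ℝ)^((3:ℝ)/2))^(2:ℕ) = (n:ℝ)^(3:ℕ) := by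
    rw [← Real.rpow_natCast ((n:ℝ)^((3:ℝ)/2)) 2, ← Real.rpow_mul hnR.le,
      ← Real.rpow_natCast (n:ℝ) 3]
    norm_num
  have hx2 : x^2 < ((Real.sqrt (1 - r) / Real.pi) / (n : ℝ) ^ ((3:ℝ)/2))^2 := by
    have h2 := mul_self_lt_mul_self (abs_nonneg x) h
    rw [abs_mul_abs_self] at h2
    nlinarith [h2]
  have hA2 : ((Real.sqrt (1 - r) / Real.pi) / (n : ℝ) ^ ((3:ℝ)/2))^2
      = (1-r) / Real.pi^2 / (n:ℝ)^(3:ℕ) := by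
    rw [div_pow, div_pow, hsq, Real.sq_sqrt h1r]
  have hys : y^2 < (1-r)/n := by
    rw [hy]
    have hn3 : ((n:ℝ))^(3:ℕ) = n * n * n := by ring
    rw [hA2, hn3] at hx2
    have hπ2 : (0:ℝ) < Real.pi^2 := by positivity
    rw [mul_pow, mul_pow, lt_div_iff₀ hnR]
    have h2 : Real.pi^2 * x^2 * (n:ℝ)^2 * n
        < Real.pi^2 * ((1-r)/Real.pi^2/(n*n*n)) * (n:ℝ)^2 * n := by
      have : (0:ℝ) < Real.pi^2 * (n:ℝ)^2 * n := by positivity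
      nlinarith [hx2]
    calc Real.pi^2 * x^2 * (n:ℝ)^2 * n
        < Real.pi^2 * ((1-r)/Real.pi^2/(n*n*n)) * (n:ℝ)^2 * n := h2
      _ = 1 - r := by field_simp
  set b : ℝ := 1 - (1-r)/(2*n) with hb
  have hlt : (1-r)/(2*(n:ℝ)) < 1 := by
    rw [div_lt_one (by positivity)]
    linarith
  have hb0 : (0:ℝ) < b := by rw [hb, sub_pos]; exact hlt
  have hcosy : b < Real.cos y := by
    have hle := Real.one_sub_sq_div_two_le_cos (x := y)
    have heq : (1-r)/(2*(n:ℝ)) = ((1-r)/n)/2 := by ring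
    rw [hb, heq]
    linarith
  have hblt : b ^ n < |Real.cos y| ^ n := by
    refine pow_lt_pow_left₀ (lt_of_lt_of_le hcosy (le_abs_self _)) hb0.le ?_
    omega
  have hbern : (1 + r)/2 ≤ b ^ n := by
    have h2 : (-2:ℝ) ≤ -((1-r)/(2*(n:ℝ))) := by
      have : (1-r)/(2*(n:ℝ)) ≤ 1 := hlt.le
      linarith
    have hB := one_add_mul_le_pow h2 n
    have heq1 : (1:ℝ) + -((1-r)/(2*(n:ℝ))) = b := by rw [hb]; ring
    have heq2 : (1:ℝ) + (n:ℝ) * -((1-r)/(2*(n:ℝ))) = (1+r)/2 := by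
      field_simp
      ring
    rw [heq1, heq2] at hB
    exact hB
  rw [hcos]
  have : r < (1+r)/2 := by linarith
  linarith
end

section
/- Let α be irrational. Suppose (nₖ) is a sequence of positive integers and (mₖ) a sequence of integers such that nₖ → ∞ and lim_{k→∞} nₖ²(mₖ/nₖ - α) = -log a for some 0 < a < 1. Then lim_{k→∞} {nₖα}^{nₖ} = a. -/
/-!
Write `dₖ = mₖ - nₖα`. The hypothesis says `nₖdₖ → -log a > 0`, so `dₖ → 0` with `dₖ > 0`
eventually; then `mₖ - 1 ≤ nₖα < mₖ`, i.e. `{nₖα} = 1 - dₖ`, and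
`(1 - dₖ)^{nₖ} → exp (-lim nₖdₖ) = a`.
-/

open Filter Real Topology

theorem Int.fract_eq_one_sub_sub_of_lt {R : Type*} [CommRing R] [LinearOrder R]
    [IsStrictOrderedRing R] [FloorRing R] {x : R} {m : ℤ} (hlt : x < m) (hle : m - x ≤ 1) :
    Int.fract x = 1 - (m - x) := by
  rw [Int.fract_eq_iff]
  refine ⟨by linarith, by linarith, m - 1, ?_⟩
  push_cast
  ring

/-- `log (1 + x)` is squeezed between `x / (1 + x)` and `x`, and both bounds behave like `x`. -/
theorem tendsto_one_add_pow_exp_of_tendsto_mul_s15 {ι : Type*} {l : Filter ι} {N : ι → ℕ}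
    {x : ι → ℝ} {c : ℝ} (hx : Tendsto x l (𝓝 0)) (hNx : Tendsto (fun i ↦ N i * x i) l (𝓝 c)) :
    Tendsto (fun i ↦ (1 + x i) ^ N i) l (𝓝 (exp c)) := by
  have hpos : ∀ᶠ i in l, 0 < 1 + x i :=
    hx.eventually (eventually_gt_nhds (by norm_num : (-1 : ℝ) < 0)) |>.mono fun i hi ↦ by linarith
  have hlower : Tendsto (fun i ↦ N i * x i / (1 + x i)) l (𝓝 c) := by
    have h := hNx.div (tendsto_const_nhds (x := (1 : ℝ)).add hx) (by norm_num)
    rwa [add_zero, div_one] at h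
  have hlog : Tendsto (fun i ↦ N i * log (1 + x i)) l (𝓝 c) := by
    refine tendsto_of_tendsto_of_tendsto_of_le_of_le' hlower hNx ?_ ?_
    · filter_upwards [hpos] with i hi
      rw [mul_div_assoc]
      gcongr
      calc x i / (1 + x i) = 1 - (1 + x i)⁻¹ := by field_simp; ring
        _ ≤ log (1 + x i) := one_sub_inv_le_log_of_pos hi
    · filter_upwards [hpos] with i hi
      gcongr
      linarith [log_le_sub_one_of_pos hi]
  refine ((continuous_exp.tendsto c).comp hlog).congr' ?_
  filter_upwards [hpos] with i hi
  simp only [Function.comp_apply, exp_nat_mul, exp_log hi]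

theorem stmt_15_general (α : ℝ) (a : ℝ) (ha : 0 < a) (ha1 : a < 1)
    (n : ℕ → ℕ) (m : ℕ → ℤ)
    (hn' : Filter.Tendsto n Filter.atTop Filter.atTop)
    (hlim : Filter.Tendsto
      (fun k => (n k : ℝ) ^ 2 * ((m k : ℝ) / n k - α))
      Filter.atTop (nhds (-Real.log a))) :
    Filter.Tendsto (fun k => Int.fract ((n k : ℝ) * α) ^ n k)
      Filter.atTop (nhds a) := by
  set d : ℕ → ℝ := fun k ↦ m k - n k * α
  have hn : Tendsto (fun k ↦ (n k : ℝ)) atTop atTop := tendsto_natCast_atTop_atTop.comp hn'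
  have hnd : Tendsto (fun k ↦ n k * d k) atTop (𝓝 (-log a)) := by
    refine hlim.congr' ?_
    filter_upwards [hn.eventually_ne_atTop 0] with k hk
    simp only [d]
    field_simp
  have hd : Tendsto d atTop (𝓝 0) := by
    refine (hnd.div_atTop hn).congr' ?_
    filter_upwards [hn.eventually_ne_atTop 0] with k hk
    field_simp
  have hd_pos : ∀ᶠ k in atTop, 0 < d k :=
    (hnd.eventually (eventually_gt_nhds (neg_pos.2 (log_neg ha ha1)))).mono
      fun k hk ↦ pos_of_mul_pos_right hk (Nat.cast_nonneg _)
  have hd_le : ∀ᶠ k in atTop, d k ≤ 1 := hd.eventually (eventually_le_nhds one_pos)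
  have hpow : Tendsto (fun k ↦ (1 + -d k) ^ n k) atTop (𝓝 a) := by
    rw [← exp_log ha]
    exact tendsto_one_add_pow_exp_of_tendsto_mul_s15 (by simpa using hd.neg)
      (by simpa using hnd.neg)
  refine hpow.congr' ?_
  filter_upwards [hd_pos, hd_le] with k hpos hle
  rw [Int.fract_eq_one_sub_sub_of_lt (by linarith) hle, sub_eq_add_neg]

theorem stmt_15 (α : ℝ) (hα : Irrational α) (a : ℝ) (ha : 0 < a) (ha1 : a < 1)
    (n : ℕ → ℕ) (m : ℕ → ℤ) (hn : ∀ k, 0 < n k)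
    (hn' : Filter.Tendsto n Filter.atTop Filter.atTop)
    (hlim : Filter.Tendsto
      (fun k => (n k : ℝ) ^ 2 * ((m k : ℝ) / n k - α))
      Filter.atTop (nhds (-Real.log a))) :
    Filter.Tendsto (fun k => Int.fract ((n k : ℝ) * α) ^ n k)
      Filter.atTop (nhds a) :=
  stmt_15_general α a ha ha1 n m hn' hlim
end

section
/- Let f : ℝ → ℝ be a function with f(0) = 1, and suppose there exist δ > 1 and q < 0 with lim_{x→0} (f(x)-1)/|x|^δ = q. Let (nₖ) be a sequence of positive integers tending to infinity, (εₖ) a sequence in {±1}, T, c > 0, and (Λₖ) a sequence with 0 < Λₖ < T/(nₖ^{1/δ} log nₖ), such that f(nₖ) = f(εₖ(Tc/nₖ^{1/δ} + Λₖ)) for all k. Then lim_{k→∞} f(nₖ)^{nₖ} = e^{q(Tc)^δ}. -/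
/-!
Write `x = ε (Tc/p + Λ)` with `p = n^{1/δ}`, so that `f n = f x`. The bound on `Λ` gives
`p Λ → 0`, hence `p |x| → Tc` and `n |x|^δ = (p |x|)^δ → (Tc)^δ`; therefore
`n (f n - 1) = n |x|^δ · (f x - 1) / |x|^δ → q (Tc)^δ`, and the compound-interest limit
turns this into `f n ^ n → exp (q (Tc)^δ)`.
-/

open Filter Topology Real

/-- `1 - a⁻¹ ≤ log a ≤ a - 1` squeezes `n log a` between `n (a - 1) / a` and `n (a - 1)`. -/
theorem tendsto_pow_of_tendsto_mul_sub_one {α : Type*} {l : Filter α} {n : α → ℕ} {a : α → ℝ}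
    {L : ℝ} (hn : Tendsto n l atTop) (ha : Tendsto (fun k => (n k : ℝ) * (a k - 1)) l (𝓝 L)) :
    Tendsto (fun k => a k ^ n k) l (𝓝 (exp L)) := by
  have hn_real : Tendsto (fun k => (n k : ℝ)) l atTop := tendsto_natCast_atTop_atTop.comp hn
  have ha_one : Tendsto a l (𝓝 1) := by
    have h := (ha.mul (tendsto_inv_atTop_zero.comp hn_real)).add_const 1
    rw [mul_zero, zero_add] at h
    refine h.congr' ?_
    filter_upwards [hn_real.eventually_gt_atTop 0] with k hk
    simp only [Function.comp_apply]
    field_simp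
    ring
  have ha_pos : ∀ᶠ k in l, 0 < a k := ha_one.eventually (lt_mem_nhds one_pos)
  have hlower : Tendsto (fun k => (n k : ℝ) * (1 - (a k)⁻¹)) l (𝓝 L) := by
    have h := ha.div ha_one one_ne_zero
    rw [div_one] at h
    refine h.congr' ?_
    filter_upwards [ha_pos] with k hk
    simp only [Pi.div_apply]
    field_simp
  have hlog : Tendsto (fun k => (n k : ℝ) * log (a k)) l (𝓝 L) :=
    tendsto_of_tendsto_of_tendsto_of_le_of_le' hlower ha
      (ha_pos.mono fun k hk => mul_le_mul_of_nonneg_left (one_sub_inv_le_log_of_pos hk)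
        (Nat.cast_nonneg _))
      (ha_pos.mono fun k hk => mul_le_mul_of_nonneg_left (log_le_sub_one_of_pos hk)
        (Nat.cast_nonneg _))
  refine ((continuous_exp.tendsto L).comp hlog).congr' ?_
  filter_upwards [ha_pos] with k hk
  rw [Function.comp_apply, exp_nat_mul, exp_log hk]

theorem tendsto_natCast_mul_sub_one_of_tendsto_div_abs_rpow {α : Type*} {l : Filter α}
    {f : ℝ → ℝ} {δ q C : ℝ} (hδ : 0 < δ)
    (hlim : Tendsto (fun x : ℝ => (f x - 1) / |x| ^ δ) (𝓝[≠] 0) (𝓝 q))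
    {n : α → ℕ} {x : α → ℝ} (hn : Tendsto n l atTop) (hx0 : ∀ k, x k ≠ 0)
    (hx : Tendsto (fun k => (n k : ℝ) ^ ((1 : ℝ) / δ) * |x k|) l (𝓝 C)) :
    Tendsto (fun k => (n k : ℝ) * (f (x k) - 1)) l (𝓝 (q * C ^ δ)) := by
  have hroot : Tendsto (fun k => (n k : ℝ) ^ ((1 : ℝ) / δ)) l atTop :=
    (tendsto_rpow_atTop (by positivity)).comp (tendsto_natCast_atTop_atTop.comp hn)
  have habs : Tendsto (fun k => |x k|) l (𝓝 0) := by
    have h := hx.mul (tendsto_inv_atTop_zero.comp hroot)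
    rw [mul_zero] at h
    refine h.congr' ?_
    filter_upwards [hroot.eventually_gt_atTop 0] with k hk
    simp only [Function.comp_apply]
    field_simp
  have hx_punctured : Tendsto x l (𝓝[≠] 0) :=
    tendsto_nhdsWithin_iff.mpr
      ⟨(tendsto_zero_iff_abs_tendsto_zero x).mpr habs, Eventually.of_forall hx0⟩
  have hscale : Tendsto (fun k => (n k : ℝ) * |x k| ^ δ) l (𝓝 (C ^ δ)) := by
    refine (hx.rpow_const (Or.inr hδ.le)).congr fun k => ?_
    rw [mul_rpow (by positivity) (abs_nonneg _), one_div,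
      rpow_inv_rpow (Nat.cast_nonneg _) hδ.ne']
  refine ((hlim.comp hx_punctured).mul hscale).congr fun k => ?_
  have : |x k| ^ δ ≠ 0 := (rpow_pos_of_pos (abs_pos.mpr (hx0 k)) δ).ne'
  simp only [Function.comp_apply]
  field_simp

theorem tendsto_mul_zero_of_lt_div_mul_log {α : Type*} {l : Filter α} {n : α → ℕ}
    {p Λ : α → ℝ} {T : ℝ} (hn : Tendsto n l atTop) (hp : ∀ k, 0 < p k)
    (hΛ : ∀ k, 0 < Λ k ∧ Λ k < T / (p k * log (n k))) :
    Tendsto (fun k => p k * Λ k) l (𝓝 0) := by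
  refine tendsto_of_tendsto_of_tendsto_of_le_of_le tendsto_const_nhds
    ((tendsto_const_nhds (x := T)).div_atTop (tendsto_log_atTop.comp
      (tendsto_natCast_atTop_atTop.comp hn))) (fun k => (mul_pos (hp k) (hΛ k).1).le)
    fun k => ?_
  calc p k * Λ k ≤ p k * (T / (p k * log (n k))) :=
        mul_le_mul_of_nonneg_left (hΛ k).2.le (hp k).le
    _ = T / log (n k) := by rw [← mul_div_assoc, mul_div_mul_left _ _ (hp k).ne']

theorem stmt_16_general (f : ℝ → ℝ) (δ q : ℝ) (hδ : 1 < δ)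
    (hlim : Filter.Tendsto (fun x : ℝ => (f x - 1) / |x| ^ δ)
      (nhdsWithin 0 {0}ᶜ) (nhds q))
    (n : ℕ → ℕ) (hn : ∀ k, 0 < n k)
    (hn' : Filter.Tendsto n Filter.atTop Filter.atTop)
    (ε : ℕ → ℝ) (hε : ∀ k, ε k = 1 ∨ ε k = -1)
    (T c : ℝ) (hT : 0 < T) (hc : 0 < c) (Λ : ℕ → ℝ)
    (hΛ : ∀ k, 0 < Λ k ∧ Λ k < T / ((n k : ℝ) ^ ((1:ℝ)/δ) * Real.log (n k)))
    (hf : ∀ k, f (n k) = f (ε k * (T * c / (n k : ℝ) ^ ((1:ℝ)/δ) + Λ k))) :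
    Filter.Tendsto (fun k => f (n k) ^ n k) Filter.atTop
      (nhds (Real.exp (q * (T * c) ^ δ))) := by
  set p : ℕ → ℝ := fun k => (n k : ℝ) ^ ((1 : ℝ) / δ)
  have hp : ∀ k, 0 < p k := fun k => rpow_pos_of_pos (Nat.cast_pos.mpr (hn k)) _
  have hpos : ∀ k, 0 < T * c / p k + Λ k := fun k =>
    add_pos (div_pos (mul_pos hT hc) (hp k)) (hΛ k).1
  have habs : ∀ k, |ε k * (T * c / p k + Λ k)| = T * c / p k + Λ k := fun k => by
    rcases hε k with h | h <;>
      rw [h, abs_mul, abs_of_pos (hpos k)] <;> norm_num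
  have hpx : Tendsto (fun k => p k * |ε k * (T * c / p k + Λ k)|) atTop (𝓝 (T * c)) := by
    have h := (tendsto_mul_zero_of_lt_div_mul_log hn' hp hΛ).const_add (T * c)
    rw [add_zero] at h
    refine h.congr fun k => ?_
    rw [habs k, mul_add, mul_div_cancel₀ _ (hp k).ne']
  refine tendsto_pow_of_tendsto_mul_sub_one hn' ?_
  simp_rw [hf]
  exact tendsto_natCast_mul_sub_one_of_tendsto_div_abs_rpow (by linarith) hlim hn'
    (fun k => abs_pos.mp ((habs k).symm ▸ hpos k)) hpx

theorem stmt_16 (f : ℝ → ℝ) (h0 : f 0 = 1) (δ q : ℝ) (hδ : 1 < δ) (hq : q < 0)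
    (hlim : Filter.Tendsto (fun x : ℝ => (f x - 1) / |x| ^ δ)
      (nhdsWithin 0 {0}ᶜ) (nhds q))
    (n : ℕ → ℕ) (hn : ∀ k, 0 < n k)
    (hn' : Filter.Tendsto n Filter.atTop Filter.atTop)
    (ε : ℕ → ℝ) (hε : ∀ k, ε k = 1 ∨ ε k = -1)
    (T c : ℝ) (hT : 0 < T) (hc : 0 < c) (Λ : ℕ → ℝ)
    (hΛ : ∀ k, 0 < Λ k ∧ Λ k < T / ((n k : ℝ) ^ ((1:ℝ)/δ) * Real.log (n k)))
    (hf : ∀ k, f (n k) = f (ε k * (T * c / (n k : ℝ) ^ ((1:ℝ)/δ) + Λ k))) :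
    Filter.Tendsto (fun k => f (n k) ^ n k) Filter.atTop
      (nhds (Real.exp (q * (T * c) ^ δ))) :=
  stmt_16_general f δ q hδ hlim n hn hn' ε hε T c hT hc Λ hΛ hf
end
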